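/- The Mordell–Tornheim double zeta value decomposes into double zeta values: for positive integers k_1, k_2 and integer k ≥ 1 with k_1 + k_2 + k such that the series converges (e.g. k ≥ 2), ∑_{m,n > 0} 1/(m^{k_1} n^{k_2} (m+n)^k) = ∑_{j=0}^{k_1-1} C(k_2-1+j, j) ζ(k+k_2+j, k_1-j) + ∑_{j=0}^{k_2-1} C(k_1-1+j, j) ζ(k+k_1+j, k_2-j). -/

import Mathlib

open Finset

/-!
Dividing the polynomial identity
`(x + y) ^ (a + b - 1) = y ^ b * ∑_{j < a} C(b-1+j, j) x^j (x+y)^(a-1-j) + (x ↔ y, a ↔ b)`,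
which follows from Pascal's rule by induction on `a + b`, by `x ^ a * y ^ b * (x + y) ^ (a + b - 1)`
gives the partial-fraction expansion of `1 / (x ^ a * y ^ b)` in powers of `x + y`. Taking
`x = m`, `y = n` and summing over `m, n ≥ 1`, each term `1 / (m ^ (a - j) * (m + n) ^ c)` sums to
`ζ(c, a - j)` under the substitution `(m, n) ↦ (m + n, m)`.
-/

/-- Double zeta value `ζ(a,b) = ∑_{m > n ≥ 1} 1/(m^a n^b)`. -/
noncomputable def doubleZeta (a b : ℕ) : ℝ :=
  ∑' p : {p : ℕ × ℕ // 1 ≤ p.2 ∧ p.2 < p.1}, 1 / ((p.1.1 : ℝ) ^ a * (p.1.2 : ℝ) ^ b)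

/-- Mordell–Tornheim double zeta value `ζ_{MT,2}(k₁,k₂;k) = ∑_{m,n ≥ 1} 1/(m^{k₁} n^{k₂} (m+n)^k)`. -/
noncomputable def mordellTornheim (k₁ k₂ k : ℕ) : ℝ :=
  ∑' p : ℕ × ℕ, 1 / (((p.1 : ℝ) + 1) ^ k₁ * ((p.2 : ℝ) + 1) ^ k₂ *
    ((p.1 : ℝ) + (p.2 : ℝ) + 2) ^ k)

section PartialFractions

variable {R : Type*} [CommRing R]

def choosePowSum (a b : ℕ) (x s : R) : R :=
  ∑ j ∈ range (a + 1), ((b + j).choose j : R) * x ^ j * s ^ (a - j)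

@[simp]
theorem choosePowSum_zero_left (b : ℕ) (x s : R) : choosePowSum 0 b x s = 1 := by
  simp [choosePowSum]

theorem choosePowSum_succ_succ (a b : ℕ) (x s : R) :
    choosePowSum (a + 1) (b + 1) x s
      = choosePowSum (a + 1) b x s + x * choosePowSum a (b + 1) x s := by
  have pascal : ∀ j, ((b + 1 + (j + 1)).choose (j + 1) : R) * x ^ (j + 1) * s ^ (a + 1 - (j + 1))
      = ((b + (j + 1)).choose (j + 1) : R) * x ^ (j + 1) * s ^ (a + 1 - (j + 1))
        + x * (((b + 1 + j).choose j : R) * x ^ j * s ^ (a - j)) := fun j => by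
    rw [show b + 1 + (j + 1) = b + (j + 1) + 1 by omega, Nat.choose_succ_succ',
      show b + (j + 1) = b + 1 + j by omega, Nat.add_sub_add_right]
    push_cast
    ring
  rw [choosePowSum, choosePowSum, choosePowSum, sum_range_succ', sum_range_succ' _ (a + 1),
    mul_sum]
  simp only [pascal, sum_add_distrib, Nat.choose_zero_right, Nat.sub_zero]
  ring

theorem add_pow_succ_eq_pow_add_mul_choosePowSum (x y : R) (b : ℕ) :
    (x + y) ^ (b + 1) = y ^ (b + 1) + x * choosePowSum b 0 y (x + y) := by
  have h := geom_sum₂_mul y (x + y) (b + 1)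
  simp only [Nat.add_sub_cancel] at h
  simp only [choosePowSum, zero_add, Nat.choose_self, Nat.cast_one, one_mul]
  linear_combination h

theorem add_pow_eq_choosePowSum (x y : R) : ∀ a b : ℕ,
    (x + y) ^ (a + b + 1)
      = y ^ (b + 1) * choosePowSum a b x (x + y) + x ^ (a + 1) * choosePowSum b a y (x + y)
  | 0, b => by simpa using add_pow_succ_eq_pow_add_mul_choosePowSum x y b
  | a + 1, 0 => by
    have h := add_pow_succ_eq_pow_add_mul_choosePowSum y x (a + 1)
    rw [add_comm y x] at h
    simp only [choosePowSum_zero_left]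
    linear_combination h
  | a + 1, b + 1 => by
    have h₁ := add_pow_eq_choosePowSum x y a (b + 1)
    have h₂ := add_pow_eq_choosePowSum x y (a + 1) b
    rw [choosePowSum_succ_succ, choosePowSum_succ_succ]
    linear_combination x * h₁ + y * h₂
termination_by a b => a + b

variable {K : Type*} [Field K]

theorem choosePowSum_div {x s : K} (hx : x ≠ 0) (hs : s ≠ 0) (a b n : ℕ) :
    choosePowSum a b x s / (x ^ (a + 1) * s ^ (n + a + b + 1))
      = ∑ j ∈ range (a + 1),
          ((b + j).choose j : K) / (x ^ (a + 1 - j) * s ^ (n + (b + 1) + j)) := by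
  rw [choosePowSum, sum_div]
  refine sum_congr rfl fun j hj => ?_
  have hj : j ≤ a := Nat.lt_succ_iff.mp (mem_range.mp hj)
  rw [← pow_mul_pow_sub x (by omega : j ≤ a + 1),
    show n + a + b + 1 = (a - j) + (n + (b + 1) + j) by omega, pow_add]
  field_simp

theorem one_div_pow_mul_pow_mul_add_pow {x y : K} (hx : x ≠ 0) (hy : y ≠ 0) (hxy : x + y ≠ 0)
    {a b : ℕ} (ha : 1 ≤ a) (hb : 1 ≤ b) (n : ℕ) :
    1 / (x ^ a * y ^ b * (x + y) ^ n)
      = ∑ j ∈ range a, ((b - 1 + j).choose j : K) / (x ^ (a - j) * (x + y) ^ (n + b + j))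
        + ∑ j ∈ range b,
            ((a - 1 + j).choose j : K) / (y ^ (b - j) * (x + y) ^ (n + a + j)) := by
  obtain ⟨a, rfl⟩ := Nat.exists_eq_add_of_le' ha
  obtain ⟨b, rfl⟩ := Nat.exists_eq_add_of_le' hb
  rw [Nat.add_sub_cancel, Nat.add_sub_cancel, ← choosePowSum_div hx hxy,
    ← choosePowSum_div hy hxy]
  field_simp
  linear_combination (x + y) ^ n * (x + y) ^ (n + a + b + 1) * add_pow_eq_choosePowSum x y a b

end PartialFractions

/-- The shift from `ℕ` to `m, n ≥ 1` followed by `(m, n) ↦ (m + n, m)`. -/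
def doubleZetaIndexEquiv : ℕ × ℕ ≃ {p : ℕ × ℕ // 1 ≤ p.2 ∧ p.2 < p.1} where
  toFun q := ⟨(q.1 + q.2 + 2, q.1 + 1), by omega⟩
  invFun p := (p.1.2 - 1, p.1.1 - p.1.2 - 1)
  left_inv := by
    rintro ⟨m, n⟩
    simp only [Prod.mk.injEq]
    omega
  right_inv := by
    rintro ⟨⟨m, n⟩, h⟩
    simp only [Subtype.mk.injEq, Prod.mk.injEq]
    omega

theorem tsum_one_div_pow_mul_add_pow_eq_doubleZeta (a b : ℕ) :
    ∑' p : ℕ × ℕ, 1 / (((p.1 : ℝ) + 1) ^ a * ((p.1 : ℝ) + p.2 + 2) ^ b)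
      = doubleZeta b a := by
  rw [doubleZeta, ← doubleZetaIndexEquiv.tsum_eq]
  refine tsum_congr fun p => ?_
  simp only [doubleZetaIndexEquiv, Equiv.coe_fn_mk]
  push_cast
  ring

theorem summable_one_div_pow_mul_add_pow {a b : ℕ} (hb : 2 ≤ b) (hab : 4 ≤ a + b) :
    Summable fun p : ℕ × ℕ => 1 / (((p.1 : ℝ) + 1) ^ a * ((p.1 : ℝ) + p.2 + 2) ^ b) := by
  have hsq : Summable fun n : ℕ => 1 / ((n : ℝ) + 1) ^ 2 := by
    simpa using (summable_nat_add_iff 1).mpr (Real.summable_one_div_nat_pow.mpr one_lt_two)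
  refine Summable.of_nonneg_of_le (fun p => by positivity) (fun p => ?_)
    (hsq.mul_of_nonneg hsq (fun n => by positivity) fun n => by positivity)
  rw [div_mul_div_comm, one_mul]
  refine one_div_le_one_div_of_le (by positivity) ?_
  have hm : (0 : ℝ) ≤ p.1 := p.1.cast_nonneg
  have hn : (0 : ℝ) ≤ p.2 := p.2.cast_nonneg
  calc ((p.1 : ℝ) + 1) ^ 2 * ((p.2 : ℝ) + 1) ^ 2
      ≤ ((p.1 : ℝ) + 1) ^ (a + (b - 2)) * ((p.2 : ℝ) + 1) ^ 2 := by
        gcongr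
        · linarith
        · omega
    _ = ((p.1 : ℝ) + 1) ^ a * ((p.1 : ℝ) + 1) ^ (b - 2) * ((p.2 : ℝ) + 1) ^ 2 := by
        rw [pow_add]
    _ ≤ ((p.1 : ℝ) + 1) ^ a * ((p.1 : ℝ) + p.2 + 2) ^ (b - 2)
          * ((p.1 : ℝ) + p.2 + 2) ^ 2 := by
        gcongr <;> linarith
    _ = ((p.1 : ℝ) + 1) ^ a * ((p.1 : ℝ) + p.2 + 2) ^ b := by
        rw [mul_assoc, ← pow_add, Nat.sub_add_cancel hb]

theorem hasSum_div_pow_mul_add_pow (c : ℝ) {a b : ℕ} (hb : 2 ≤ b) (hab : 4 ≤ a + b) :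
    HasSum (fun p : ℕ × ℕ => c / (((p.1 : ℝ) + 1) ^ a * ((p.1 : ℝ) + p.2 + 2) ^ b))
      (c * doubleZeta b a) := by
  rw [← tsum_one_div_pow_mul_add_pow_eq_doubleZeta]
  simpa only [mul_one_div] using ((summable_one_div_pow_mul_add_pow hb hab).hasSum.mul_left c)

theorem hasSum_div_pow_mul_add_pow' (c : ℝ) {a b : ℕ} (hb : 2 ≤ b) (hab : 4 ≤ a + b) :
    HasSum (fun p : ℕ × ℕ => c / (((p.2 : ℝ) + 1) ^ a * ((p.1 : ℝ) + p.2 + 2) ^ b))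
      (c * doubleZeta b a) := by
  refine (Equiv.prodComm ℕ ℕ).hasSum_iff.mp ?_
  convert hasSum_div_pow_mul_add_pow c hb hab using 4 with p
  simp [add_comm]

theorem mordellTornheim_eq_sum_of_double_zetas
    (k₁ k₂ k : ℕ) (hk₁ : 1 ≤ k₁) (hk₂ : 1 ≤ k₂) (hk : 2 ≤ k) :
    mordellTornheim k₁ k₂ k
      = ∑ j ∈ Finset.range k₁, ((k₂ - 1 + j).choose j : ℝ) *
          doubleZeta (k + k₂ + j) (k₁ - j)
        + ∑ j ∈ Finset.range k₂, ((k₁ - 1 + j).choose j : ℝ) *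
          doubleZeta (k + k₁ + j) (k₂ - j) := by
  have decomp (p : ℕ × ℕ) := one_div_pow_mul_pow_mul_add_pow (x := (p.1 : ℝ) + 1)
    (y := (p.2 : ℝ) + 1) (by positivity) (by positivity) (by positivity) hk₁ hk₂ k
  simp only [show ∀ m n : ℕ, (m : ℝ) + 1 + (n + 1) = m + n + 2 from fun m n => by ring]
    at decomp
  rw [mordellTornheim, tsum_congr decomp]
  refine ((hasSum_sum fun j hj => ?_).add (hasSum_sum fun j hj => ?_)).tsum_eq
  · have hj := mem_range.mp hj
    exact hasSum_div_pow_mul_add_pow _ (by omega) (by omega)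
  · have hj := mem_range.mp hj
    exact hasSum_div_pow_mul_add_pow' _ (by omega) (by omega)
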